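/- Assume λ_k < α ≤ β. Then there exists ρ > 0 such that ‖M_{α,β}(v)‖ ≤ ρ ‖v‖_{L²} for all v ∈ V₂. -/

import Mathlib

/-
Since `M v` maximizes `u ↦ J(u + v)` on `V₁`, we have `J(v) ≤ J(M v + v)`. As `α ≤ β`, `J` is
squeezed between the quadratic forms `½(‖u‖² - β‖Tu‖²)` and `½(‖u‖² - α‖Tu‖²)`, and `M v` is
orthogonal to `v` both in `X₀` and in `L²`, so `α‖T(M v)‖² - ‖M v‖² ≤ (β - α)‖Tv‖²`. On `V₁`
we have `‖u‖² ≤ λ_k‖Tu‖²`, hence the left side is at least `(α/λ_k - 1)‖M v‖²` and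
`‖M v‖² ≤ λ_k(β - α)/(α - λ_k) ‖Tv‖²`.
-/

open MeasureTheory RealInnerProductSpace Filter Topology

/-- The functional `J_{α,β}(u) = ½(B(u,u) - α∫_Ω (u⁺)² - β∫_Ω (u⁻)²)`, where the Hilbert
space `X₀` carries the Gagliardo-type inner product `B = ⟪·,·⟫` and `T : X₀ → L²(Ω)` is the
embedding into `L²(Ω)`; note `∫_Ω (u⁺)² = ‖(Tu)⁺‖²_{L²}`. -/
noncomputable def Jfun {Ω : Type*} [MeasurableSpace Ω] {μ : Measure Ω}
    {X₀ : Type*} [NormedAddCommGroup X₀] [InnerProductSpace ℝ X₀]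
    (T : X₀ →ₗ[ℝ] Lp ℝ 2 μ) (α β : ℝ) (u : X₀) : ℝ :=
  (⟪u, u⟫ - α * ‖Lp.posPart (T u)‖ ^ 2 - β * ‖Lp.negPart (T u)‖ ^ 2) / 2

namespace MeasureTheory.Lp

variable {Ω : Type*} [MeasurableSpace Ω] {μ : Measure Ω}

theorem posPart_sub_negPart {p : ENNReal} (f : Lp ℝ p μ) : posPart f - negPart f = f := by
  apply Lp.ext
  filter_upwards [coeFn_posPart f, coeFn_negPart f,
    coeFn_sub (posPart f) (negPart f)] with a h_pos h_neg h_sub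
  rw [h_sub, Pi.sub_apply, h_pos, h_neg, sub_neg_eq_add, add_comm, min_add_max, add_zero]

theorem inner_posPart_negPart (f : Lp ℝ 2 μ) : ⟪posPart f, negPart f⟫ = 0 := by
  rw [L2.inner_def]
  refine integral_eq_zero_of_ae ?_
  filter_upwards [coeFn_posPart f, coeFn_negPart f] with a h_pos h_neg
  rw [Pi.zero_apply, h_pos, h_neg]
  rcases le_total (f a) 0 with h | h
  · simp [max_eq_right h]
  · simp [min_eq_right h]

theorem norm_sq_eq_norm_posPart_sq_add_norm_negPart_sq (f : Lp ℝ 2 μ) :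
    ‖f‖ ^ 2 = ‖posPart f‖ ^ 2 + ‖negPart f‖ ^ 2 := by
  have h := norm_sub_sq_real (posPart f) (negPart f)
  rw [posPart_sub_negPart, inner_posPart_negPart] at h
  linarith

end MeasureTheory.Lp

section Jfun

variable {Ω : Type*} [MeasurableSpace Ω] {μ : Measure Ω}
  {X : Type*} [NormedAddCommGroup X] [InnerProductSpace ℝ X]
  (T : X →ₗ[ℝ] Lp ℝ 2 μ) {α β : ℝ}

theorem Jfun_le (hαβ : α ≤ β) (u : X) : Jfun T α β u ≤ (‖u‖ ^ 2 - α * ‖T u‖ ^ 2) / 2 := by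
  have h_neg : 0 ≤ (β - α) * ‖Lp.negPart (T u)‖ ^ 2 := by
    have := sub_nonneg.mpr hαβ; positivity
  rw [Jfun, real_inner_self_eq_norm_sq, Lp.norm_sq_eq_norm_posPart_sq_add_norm_negPart_sq (T u)]
  linarith

theorem le_Jfun (hαβ : α ≤ β) (u : X) : (‖u‖ ^ 2 - β * ‖T u‖ ^ 2) / 2 ≤ Jfun T α β u := by
  have h_pos : 0 ≤ (β - α) * ‖Lp.posPart (T u)‖ ^ 2 := by
    have := sub_nonneg.mpr hαβ; positivity
  rw [Jfun, real_inner_self_eq_norm_sq, Lp.norm_sq_eq_norm_posPart_sq_add_norm_negPart_sq (T u)]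
  linarith

theorem sub_le_of_Jfun_le_Jfun_add {u v : X} (huv : ⟪u, v⟫ = 0) (hTuv : ⟪T u, T v⟫ = 0)
    (hαβ : α ≤ β) (hJ : Jfun T α β v ≤ Jfun T α β (u + v)) :
    α * ‖T u‖ ^ 2 - ‖u‖ ^ 2 ≤ (β - α) * ‖T v‖ ^ 2 := by
  have h_add : ‖u + v‖ ^ 2 = ‖u‖ ^ 2 + ‖v‖ ^ 2 := by
    rw [norm_add_sq_real, huv]; ring
  have hT_add : ‖T (u + v)‖ ^ 2 = ‖T u‖ ^ 2 + ‖T v‖ ^ 2 := by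
    rw [map_add, norm_add_sq_real, hTuv]; ring
  have := (le_Jfun T hαβ v).trans (hJ.trans (Jfun_le T hαβ (u + v)))
  rw [h_add, hT_add] at this
  linarith

theorem norm_sq_le_of_Jfun_le_Jfun_add {lk : ℝ} (hlk : 0 < lk) (hα : lk < α) (hαβ : α ≤ β)
    {u v : X} (hu : ⟪u, u⟫ ≤ lk * ‖T u‖ ^ 2) (huv : ⟪u, v⟫ = 0) (hTuv : ⟪T u, T v⟫ = 0)
    (hJ : Jfun T α β v ≤ Jfun T α β (u + v)) :
    ‖u‖ ^ 2 ≤ lk * (β - α) / (α - lk) * ‖T v‖ ^ 2 := by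
  have h_gap := sub_le_of_Jfun_le_Jfun_add T huv hTuv hαβ hJ
  rw [real_inner_self_eq_norm_sq] at hu
  have h_lower : (α - lk) * ‖u‖ ^ 2 ≤ lk * (α * ‖T u‖ ^ 2 - ‖u‖ ^ 2) := by
    nlinarith [mul_le_mul_of_nonneg_left hu (hlk.trans hα).le]
  rw [div_mul_eq_mul_div, le_div_iff₀ (sub_pos.mpr hα)]
  nlinarith [mul_le_mul_of_nonneg_left h_gap hlk.le]

end Jfun

theorem stmt_6_general
    {n : ℕ}
    {Ωs : Set (EuclideanSpace ℝ (Fin n))}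
    {X₀ : Type*} [NormedAddCommGroup X₀] [InnerProductSpace ℝ X₀]
    (T : X₀ →ₗ[ℝ] Lp ℝ 2 (volume.restrict Ωs))
    {lk : ℝ} (hlk0 : 0 < lk)
    (V₁ V₂ : Submodule ℝ X₀)
    (hV₂ : ∀ v : X₀, v ∈ V₂ ↔ ∀ u ∈ V₁, ⟪u, v⟫ = 0 ∧ ⟪T u, T v⟫ = 0)
    (hV₁b : ∀ u ∈ V₁, ⟪u, u⟫ ≤ lk * ‖T u‖ ^ 2)
    {α β : ℝ} (hA : lk < α) (hAB : α ≤ β)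
    (M : V₂ → V₁)
    (hM : ∀ (v : V₂) (u : V₁),
      Jfun T α β ((u : X₀) + (v : X₀)) ≤ Jfun T α β ((M v : X₀) + (v : X₀)))
    :
    ∃ ρ > 0, ∀ v : V₂, ‖(M v : X₀)‖ ≤ ρ * ‖T (v : X₀)‖ := by
  set C := lk * (β - α) / (α - lk)
  refine ⟨√C + 1, by positivity, fun v => ?_⟩
  obtain ⟨huv, hTuv⟩ := (hV₂ v).mp v.2 (M v) (M v).2
  have hJ : Jfun T α β v ≤ Jfun T α β ((M v : X₀) + v) := by
    simpa using hM v 0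
  have h_sq := norm_sq_le_of_Jfun_le_Jfun_add T hlk0 hA hAB (hV₁b _ (M v).2) huv hTuv hJ
  have h_sqrt : ‖(M v : X₀)‖ ≤ √C * ‖T (v : X₀)‖ := by
    rw [← Real.sqrt_sq (norm_nonneg (T (v : X₀))), ← Real.sqrt_mul' _ (sq_nonneg _)]
    exact Real.le_sqrt_of_sq_le h_sq
  exact h_sqrt.trans (by gcongr; linarith)

theorem stmt_6
    {n : ℕ} {s : ℝ} (hs0 : 0 < s) (hs1 : s < 1) (hns : 2 * s < (n : ℝ))
    {Ωs : Set (EuclideanSpace ℝ (Fin n))} (hΩb : Bornology.IsBounded Ωs)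
    (hΩm : MeasurableSet Ωs)
    {K : EuclideanSpace ℝ (Fin n) → ℝ} (hKpos : ∀ x, x ≠ 0 → 0 < K x)
    (hK1 : Integrable (fun x => min (‖x‖ ^ 2) 1 * K x))
    (hK2 : ∃ lam > 0, ∀ x, x ≠ 0 → lam * ‖x‖ ^ (-((n : ℝ) + 2 * s)) ≤ K x)
    (hK3 : ∀ x, K (-x) = K x)
    {X₀ : Type*} [NormedAddCommGroup X₀] [InnerProductSpace ℝ X₀] [CompleteSpace X₀]
    (T : X₀ →ₗ[ℝ] Lp ℝ 2 (volume.restrict Ωs)) (hT : Function.Injective T)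
    {lk lk1 : ℝ} (hlk0 : 0 < lk) (hlk : lk < lk1)
    (V₁ V₂ : Submodule ℝ X₀) [FiniteDimensional ℝ V₁]
    (hV₂ : ∀ v : X₀, v ∈ V₂ ↔ ∀ u ∈ V₁, ⟪u, v⟫ = 0 ∧ ⟪T u, T v⟫ = 0)
    (hcompl : IsCompl V₁ V₂)
    (hV₁b : ∀ u ∈ V₁, ⟪u, u⟫ ≤ lk * ‖T u‖ ^ 2)
    (hV₂b : ∀ v ∈ V₂, lk1 * ‖T v‖ ^ 2 ≤ ⟪v, v⟫)
    (lam1 : ℝ) (hlam1 : 0 < lam1)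
    (hPoin : ∀ u : X₀, lam1 * ‖T u‖ ^ 2 ≤ ⟪u, u⟫)
    {α β : ℝ} (hA : lk < α) (hAB : α ≤ β)
    (M : V₂ → V₁)
    (hM : ∀ (v : V₂) (u : V₁),
      Jfun T α β ((u : X₀) + (v : X₀)) ≤ Jfun T α β ((M v : X₀) + (v : X₀)))
    :
    ∃ ρ > 0, ∀ v : V₂, ‖(M v : X₀)‖ ≤ ρ * ‖T (v : X₀)‖ :=
  stmt_6_general T hlk0 V₁ V₂ hV₂ hV₁b hA hAB M hM
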